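/- Let a : ℕ → ℕ (indexed from 1) satisfy: a(1) = 1, a(2) = 2, and for every n ≥ 2, a(n+1) is the smallest positive integer not among a(1), …, a(n) whose greatest common divisor with a(n) exceeds 1. If p is a prime such that infinitely many terms of the sequence are multiples of p, then every positive multiple of p occurs as a term of the sequence. -/

import Mathlib

/-!
If `m > 0` never occurs in the sequence, then `m` is a candidate at every step: whenever
`gcd m (a n) > 1` with `n ≥ 2`, minimality forces `a (n + 1) < m`. The terms of the sequence
are distinct, so this can happen only finitely often. For `m = k * p`, every term divisible by `p`
shares the factor `p` with `m`, so only finitely many terms would be multiples of `p`.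
-/

/-- The EKG sequence property: `a 1 = 1`, `a 2 = 2`, and for `n ≥ 2`,
`a (n+1)` is the smallest positive integer not among `a 1, …, a n`
whose gcd with `a n` exceeds 1. -/
def IsEKG (a : ℕ → ℕ) : Prop :=
  a 1 = 1 ∧ a 2 = 2 ∧
    ∀ n, 2 ≤ n →
      IsLeast {m : ℕ | 0 < m ∧ (∀ i, 1 ≤ i → i ≤ n → a i ≠ m) ∧
        1 < Nat.gcd m (a n)} (a (n + 1))

namespace IsEKG

variable {a : ℕ → ℕ}

theorem ne_of_lt (ha : IsEKG a) {i j : ℕ} (hi : 1 ≤ i) (hij : i < j) : a i ≠ a j := by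
  obtain ⟨h1, h2, hstep⟩ := ha
  obtain ⟨n, rfl⟩ : ∃ n, j = n + 1 := ⟨j - 1, by omega⟩
  rcases Nat.lt_or_ge n 2 with hn | hn
  · obtain rfl : i = 1 := by omega
    obtain rfl : n = 1 := by omega
    simp [h1, h2]
  · exact (hstep n hn).1.2.1 i hi (by omega)

theorem injOn (ha : IsEKG a) : Set.InjOn a (Set.Ici 1) := by
  intro i hi j hj hij
  by_contra hne
  rcases Nat.lt_or_gt_of_ne hne with h | h
  · exact ha.ne_of_lt hi h hij
  · exact ha.ne_of_lt hj h hij.symm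

theorem succ_lt_of_one_lt_gcd (ha : IsEKG a) {m n : ℕ} (hm : 0 < m)
    (hmiss : ∀ i, 1 ≤ i → a i ≠ m) (hn : 2 ≤ n) (hgcd : 1 < Nat.gcd m (a n)) :
    a (n + 1) < m :=
  lt_of_le_of_ne ((ha.2.2 n hn).2 ⟨hm, fun i hi _ ↦ hmiss i hi, hgcd⟩) (hmiss (n + 1) (by omega))

theorem finite_one_lt_gcd_of_forall_ne (ha : IsEKG a) {m : ℕ} (hm : 0 < m)
    (hmiss : ∀ i, 1 ≤ i → a i ≠ m) : {n | 1 ≤ n ∧ 1 < Nat.gcd m (a n)}.Finite := by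
  set S := {n | 2 ≤ n ∧ 1 < Nat.gcd m (a n)}
  have hinj : Set.InjOn (fun n ↦ a (n + 1)) S :=
    ha.injOn.comp (add_left_injective 1).injOn fun n _ ↦ Set.mem_Ici.2 (by omega)
  have hS : S.Finite := by
    refine Set.Finite.of_finite_image ((Set.finite_Iio m).subset ?_) hinj
    rintro _ ⟨n, ⟨hn, hgcd⟩, rfl⟩
    exact ha.succ_lt_of_one_lt_gcd hm hmiss hn hgcd
  refine ((Set.finite_singleton 1).union hS).subset ?_
  rintro n ⟨hn, hgcd⟩
  rcases Nat.eq_or_lt_of_le hn with rfl | hn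
  · exact Or.inl rfl
  · exact Or.inr ⟨hn, hgcd⟩

end IsEKG

theorem ekg_all_multiples_of_p (a : ℕ → ℕ) (ha : IsEKG a) (p : ℕ) (hp : p.Prime)
    (hinf : {n : ℕ | 1 ≤ n ∧ p ∣ a n}.Infinite) :
    ∀ k : ℕ, 1 ≤ k → ∃ n : ℕ, 1 ≤ n ∧ a n = k * p := by
  intro k hk
  by_contra! hmiss
  have hm : 0 < k * p := Nat.mul_pos hk hp.pos
  refine hinf ((ha.finite_one_lt_gcd_of_forall_ne hm hmiss).subset ?_)
  rintro n ⟨hn, hpn⟩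
  have hpgcd : p ∣ Nat.gcd (k * p) (a n) := Nat.dvd_gcd (dvd_mul_left p k) hpn
  exact ⟨hn, hp.one_lt.trans_le (Nat.le_of_dvd (Nat.gcd_pos_of_pos_left _ hm) hpgcd)⟩
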